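/- Let K and K' be non-empty compact convex subsets of ℝ^d with K ⊆ interior-relative enlargement K_δ ⊆ K' for some δ > 0 (i.e., K' ⊇ K_δ = K + B̄(0,δ)). Then for every non-empty compact convex P ⊇ K' there exists θ ∈ (0,1) and C > 0 such that exp(h_{-K}(x))^{1-θ} · exp(h_{-P}(x))^{θ} ≤ C·exp(h_{-K'}(x)) for all x ∈ ℝ^d. -/

import Mathlib

/-!
Write `a, b, c` for `h_{-K}(x), h_{-P}(x), h_{-K'}(x)`. Fattening `K` by `δ` raises its support
function by `δ‖x‖`, so `a + δ‖x‖ ≤ c`, while a point of `K` and a bound on `P` give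
`b ≤ a + M‖x‖`. Hence for `θ = δ / (δ + M)` the convex combination `(1 - θ) a + θ b` stays below
`c`, which is the claim with `C = 1` after exponentiating.
-/

open scoped RealInnerProductSpace Pointwise

/-- Supporting function of a set `K ⊆ ℝ^d`: `h_K(x) = sup_{η ∈ K} ⟪x, η⟫`. -/
noncomputable def suppFn {d : ℕ} (K : Set (EuclideanSpace ℝ (Fin d)))
    (x : EuclideanSpace ℝ (Fin d)) : ℝ :=
  sSup ((fun η => ⟪x, η⟫) '' K)

section SupportFunction

variable {d : ℕ} {K K' : Set (EuclideanSpace ℝ (Fin d))}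

lemma le_suppFn (hK : IsCompact K) {η : EuclideanSpace ℝ (Fin d)} (hη : η ∈ K)
    (x : EuclideanSpace ℝ (Fin d)) : ⟪x, η⟫ ≤ suppFn K x :=
  le_csSup (hK.image (continuous_const.inner continuous_id)).bddAbove ⟨η, hη, rfl⟩

lemma suppFn_le (hK : K.Nonempty) {x : EuclideanSpace ℝ (Fin d)} {c : ℝ}
    (h : ∀ η ∈ K, ⟪x, η⟫ ≤ c) : suppFn K x ≤ c :=
  csSup_le (hK.image _) (Set.forall_mem_image.mpr h)

lemma neg_norm_mul_norm_le_suppFn (hK : IsCompact K) {η : EuclideanSpace ℝ (Fin d)} (hη : η ∈ K)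
    (x : EuclideanSpace ℝ (Fin d)) : -(‖x‖ * ‖η‖) ≤ suppFn K x :=
  (neg_le_of_abs_le (abs_real_inner_le_norm x η)).trans (le_suppFn hK hη x)

lemma suppFn_le_mul_norm (hK : K.Nonempty) {R : ℝ} (hR : K ⊆ Metric.closedBall 0 R)
    (x : EuclideanSpace ℝ (Fin d)) : suppFn K x ≤ R * ‖x‖ := by
  refine suppFn_le hK fun η hη => ?_
  have hηR : ‖η‖ ≤ R := mem_closedBall_zero_iff.mp (hR hη)
  calc ⟪x, η⟫ ≤ ‖x‖ * ‖η‖ := real_inner_le_norm x η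
    _ ≤ R * ‖x‖ := by rw [mul_comm]; exact mul_le_mul_of_nonneg_right hηR (norm_nonneg x)

lemma exists_mem_closedBall_inner_eq (x : EuclideanSpace ℝ (Fin d)) {δ : ℝ} (hδ : 0 ≤ δ) :
    ∃ u ∈ Metric.closedBall (0 : EuclideanSpace ℝ (Fin d)) δ, ⟪x, u⟫ = δ * ‖x‖ := by
  rcases eq_or_ne x 0 with rfl | hx
  · exact ⟨0, Metric.mem_closedBall_self hδ, by simp⟩
  have hx' : ‖x‖ ≠ 0 := norm_ne_zero_iff.mpr hx
  refine ⟨(δ / ‖x‖) • x, ?_, ?_⟩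
  · rw [mem_closedBall_zero_iff, norm_smul, Real.norm_of_nonneg (by positivity),
      div_mul_cancel₀ _ hx']
  · rw [real_inner_smul_right, real_inner_self_eq_norm_sq]
    field_simp

lemma suppFn_add_mul_norm_le (hK : K.Nonempty) (hK' : IsCompact K') {δ : ℝ} (hδ : 0 ≤ δ)
    (hKδ : K + Metric.closedBall 0 δ ⊆ K') (x : EuclideanSpace ℝ (Fin d)) :
    suppFn K x + δ * ‖x‖ ≤ suppFn K' x := by
  obtain ⟨u, hu, hxu⟩ := exists_mem_closedBall_inner_eq x hδ
  rw [← le_sub_iff_add_le]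
  refine suppFn_le hK fun η hη => le_sub_iff_add_le.mpr ?_
  calc ⟪x, η⟫ + δ * ‖x‖ = ⟪x, η + u⟫ := by rw [inner_add_right, hxu]
    _ ≤ suppFn K' x := le_suppFn hK' (hKδ (Set.add_mem_add hη hu)) x

lemma neg_add_closedBall_subset (hKδ : K + Metric.closedBall 0 δ ⊆ K') :
    -K + Metric.closedBall 0 δ ⊆ -K' := by
  rwa [← Set.neg_subset_neg, neg_neg, neg_add, neg_neg, neg_closedBall, neg_zero]

end SupportFunction

lemma exists_mem_Ioo_mul_le {δ M : ℝ} (hδ : 0 < δ) (hM : 0 < M) :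
    ∃ θ ∈ Set.Ioo (0 : ℝ) 1, θ * M ≤ δ := by
  refine ⟨δ / (δ + M), ⟨by positivity, (div_lt_one (by positivity)).mpr (by linarith)⟩, ?_⟩
  rw [div_mul_eq_mul_div, div_le_iff₀ (by positivity)]
  nlinarith

theorem omega_switched_general (d : ℕ) (K K' : Set (EuclideanSpace ℝ (Fin d)))
    (hne : K.Nonempty) (hcomp : IsCompact K)
    (hcomp' : IsCompact K')
    (δ : ℝ) (hδ : 0 < δ)
    (hKδ : K + Metric.closedBall (0 : EuclideanSpace ℝ (Fin d)) δ ⊆ K') :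
    ∀ P : Set (EuclideanSpace ℝ (Fin d)), P.Nonempty → IsCompact P → Convex ℝ P → K' ⊆ P →
      ∃ θ ∈ Set.Ioo (0 : ℝ) 1, ∃ C > (0 : ℝ), ∀ x,
        Real.exp (suppFn (-K) x) ^ (1 - θ) * Real.exp (suppFn (-P) x) ^ θ
          ≤ C * Real.exp (suppFn (-K') x) := by
  intro P hPne hPcomp _ _
  obtain ⟨η, hη⟩ := hne
  obtain ⟨R, hR, hPR⟩ := hPcomp.neg.isBounded.subset_closedBall_lt 0 0
  obtain ⟨θ, ⟨hθ0, hθ1⟩, hθM⟩ := exists_mem_Ioo_mul_le hδ (by positivity : 0 < R + ‖η‖)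
  refine ⟨θ, ⟨hθ0, hθ1⟩, 1, one_pos, fun x => ?_⟩
  have hK' : suppFn (-K) x + δ * ‖x‖ ≤ suppFn (-K') x :=
    suppFn_add_mul_norm_le (Set.nonempty_neg.mpr ⟨η, hη⟩) hcomp'.neg hδ.le
      (neg_add_closedBall_subset hKδ) x
  have hP : suppFn (-P) x ≤ suppFn (-K) x + (R + ‖η‖) * ‖x‖ := by
    have hK := neg_norm_mul_norm_le_suppFn hcomp.neg (Set.neg_mem_neg.mpr hη) x
    rw [norm_neg] at hK
    linarith [suppFn_le_mul_norm (Set.nonempty_neg.mpr hPne) hPR x]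
  rw [one_mul, ← Real.exp_mul, ← Real.exp_mul, ← Real.exp_add, Real.exp_le_exp]
  nlinarith [mul_le_mul_of_nonneg_left hP hθ0.le,
    mul_le_mul_of_nonneg_right hθM (norm_nonneg x)]

theorem omega_switched (d : ℕ) (K K' : Set (EuclideanSpace ℝ (Fin d)))
    (hne : K.Nonempty) (hcomp : IsCompact K) (hconv : Convex ℝ K)
    (hne' : K'.Nonempty) (hcomp' : IsCompact K') (hconv' : Convex ℝ K')
    (δ : ℝ) (hδ : 0 < δ)
    (hKδ : K + Metric.closedBall (0 : EuclideanSpace ℝ (Fin d)) δ ⊆ K') :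
    ∀ P : Set (EuclideanSpace ℝ (Fin d)), P.Nonempty → IsCompact P → Convex ℝ P → K' ⊆ P →
      ∃ θ ∈ Set.Ioo (0 : ℝ) 1, ∃ C > (0 : ℝ), ∀ x,
        Real.exp (suppFn (-K) x) ^ (1 - θ) * Real.exp (suppFn (-P) x) ^ θ
          ≤ C * Real.exp (suppFn (-K') x) :=
  omega_switched_general d K K' hne hcomp hcomp' δ hδ hKδ
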